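/- Let n ≥ 1, let a < b be reals, and let γ : [a,b] → ℝ^n be a curve with totally positive torsion. Then γ is a convex curve: there do not exist n+1 pairwise distinct parameters t₁, …, t_{n+1} ∈ [a,b] such that the points γ(t₁), …, γ(t_{n+1}) all lie in a single affine hyperplane of ℝ^n. In particular, for every integer 1 ≤ k ≤ n and every (c₀, c₁, …, c_k) ∈ ℝ^{k+1} with (c₀,…,c_k) ≠ (0,…,0), the equation c₀ + c₁γ₁(t) + … + c_kγ_k(t) = 0 has at most k solutions t ∈ [a,b]. -/

import Mathlib

/-!
The leading minors in the definition of totally positive torsion are the Wronskians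
`W(γ₁', …, γₘ')`. A family `g₁, …, gₖ` whose leading Wronskians are all positive on an open
interval is a Chebyshev system there: a nontrivial combination `∑ cⱼ gⱼ` has fewer than `k` zeros.
This goes by induction on `k`: since `W(g₁, …, gₖ) = g₁ᵏ · W((g₂/g₁)', …, (gₖ/g₁)')`, the
derivatives of the quotients `gⱼ/g₁` again have positive leading Wronskians, and Rolle's theorem
applied to `∑ cⱼ gⱼ / g₁` loses at most one zero. One more application of Rolle's theorem, now on
`[a, b]`, bounds the zeros of `c₀ + ∑ cⱼ γⱼ` by `k`; an affine hyperplane through `n + 1` points of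
the curve would give `n + 1` zeros with `k = n`.
-/

noncomputable section

open Set

def HasTotallyPositiveTorsion (d : ℕ) (a b : ℝ) (γ : ℝ → Fin d → ℝ) : Prop :=
  ContinuousOn γ (Set.Icc a b) ∧
  ContDiffOn ℝ d γ (Set.Ioo a b) ∧
  ∀ t ∈ Set.Ioo a b, ∀ (k : ℕ) (hk : k ≤ d), 1 ≤ k →
    0 < (Matrix.of (fun i j : Fin k =>
      iteratedDerivWithin (j.1 + 1) γ (Set.Ioo a b) t (Fin.castLE hk i))).det

open Filter Topology

-- `deriv f = 0` wherever `f` is not differentiable, so Rolle's theorem needs no differentiability.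
theorem encard_zeros_le_encard_zeros_deriv_add_one {s : Set ℝ} (hs : s.OrdConnected) {f : ℝ → ℝ}
    (hf : ContinuousOn f s) :
    {x ∈ s | f x = 0}.encard ≤ {x ∈ interior s | deriv f x = 0}.encard + 1 := by
  set D := {x ∈ interior s | deriv f x = 0}
  obtain hD | hD := D.finite_or_infinite
  swap
  · simp [hD.encard_eq]
  have hinterleaved :
      ∀ T : Finset ℝ, ↑T ⊆ {x ∈ s | f x = 0} → T.card ≤ hD.toFinset.card + 1 := by
    intro T hT
    refine Finset.card_le_of_interleaved fun x hx y hy hxy _ => ?_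
    obtain ⟨z, hz, hz'⟩ := exists_deriv_eq_zero hxy (hf.mono (hs.out (hT hx).1 (hT hy).1))
      ((hT hx).2.trans (hT hy).2.symm)
    have hzs : z ∈ interior s := interior_mono (Ioo_subset_Icc_self.trans
      (hs.out (hT hx).1 (hT hy).1)) (by rwa [isOpen_Ioo.interior_eq])
    exact ⟨z, hD.mem_toFinset.2 ⟨hzs, hz'⟩, hz.1, hz.2⟩
  rw [hD.encard_eq_coe_toFinset_card]
  by_contra! hlt
  obtain ⟨T, hTZ, hTcard⟩ := Set.exists_subset_encard_eq (Order.add_one_le_of_lt hlt)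
  have hTfin : T.Finite := finite_of_encard_eq_coe hTcard
  have hT := hinterleaved hTfin.toFinset (by simpa using hTZ)
  rw [hTfin.encard_eq_coe_toFinset_card] at hTcard
  norm_cast at hTcard
  omega

def wronskian {m : ℕ} (f : Fin m → ℝ → ℝ) (x : ℝ) : ℝ :=
  (Matrix.of fun i j : Fin m => iteratedDeriv j (f i) x).det

theorem wronskian_congr {m : ℕ} {f g : Fin m → ℝ → ℝ} {x : ℝ} (h : ∀ i, f i =ᶠ[𝓝 x] g i) :
    wronskian f x = wronskian g x := by
  simp only [wronskian, fun i j => (h i).iteratedDeriv_eq j]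

theorem wronskian_fin_one (f : Fin 1 → ℝ → ℝ) (x : ℝ) : wronskian f x = f 0 x := by
  simp [wronskian]

theorem wronskian_mul_right {m : ℕ} {f : Fin m → ℝ → ℝ} {h : ℝ → ℝ} {x : ℝ}
    (hf : ∀ i, ContDiffAt ℝ (m - 1 : ℕ) (f i) x) (hh : ContDiffAt ℝ (m - 1 : ℕ) h x) :
    wronskian (fun i y => f i y * h y) x = wronskian f x * h x ^ m := by
  set T : Matrix (Fin m) (Fin m) ℝ :=
    Matrix.of fun r j => (j.1.choose r : ℝ) * iteratedDeriv (j - r) h x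
  have hleibniz : (Matrix.of fun i j : Fin m => iteratedDeriv j (fun y => f i y * h y) x) =
      (Matrix.of fun i j : Fin m => iteratedDeriv j (f i) x) * T := by
    ext i j
    have hj : (j : ℕ) ≤ m - 1 := by omega
    calc iteratedDeriv j (fun y => f i y * h y) x
        = ∑ r ∈ Finset.range (j + 1),
            (j.1.choose r : ℝ) * iteratedDeriv r (f i) x * iteratedDeriv (j - r) h x :=
          iteratedDeriv_fun_mul ((hf i).of_le (by exact_mod_cast hj))
            (hh.of_le (by exact_mod_cast hj))
      _ = ∑ r ∈ Finset.range m,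
            (j.1.choose r : ℝ) * iteratedDeriv r (f i) x * iteratedDeriv (j - r) h x := by
          refine Finset.sum_subset (Finset.range_subset_range.2 (by omega)) fun r _ hr => ?_
          simp [Nat.choose_eq_zero_of_lt (by simpa using hr : (j : ℕ) < r)]
      _ = _ := by
          rw [← Fin.sum_univ_eq_sum_range, Matrix.mul_apply]
          exact Finset.sum_congr rfl fun r _ => by simp only [T, Matrix.of_apply]; ring
  have hT : T.det = h x ^ m := by
    rw [Matrix.det_of_isUpperTriangular fun r j hjr => by
      simp [T, Nat.choose_eq_zero_of_lt (show (j : ℕ) < r from hjr)]]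
    simp [T]
  rw [wronskian, hleibniz, Matrix.det_mul, hT, wronskian]

theorem wronskian_cons_one {m : ℕ} (u : Fin m → ℝ → ℝ) (x : ℝ) :
    wronskian (Fin.cons (fun _ => 1) u : Fin (m + 1) → ℝ → ℝ) x =
      wronskian (fun i => deriv (u i)) x := by
  rw [wronskian, Matrix.det_succ_row_zero, Fintype.sum_eq_single 0]
  · simp only [wronskian, Fin.val_zero, pow_zero, one_mul, Fin.succAbove_zero, Matrix.of_apply,
      Fin.cons_zero, iteratedDeriv_zero]
    refine congrArg Matrix.det ?_
    ext i j
    simp [iteratedDeriv_succ']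
  · intro j hj
    simp [iteratedDeriv_const, Fin.val_ne_zero_iff.2 hj]

theorem wronskian_eq_pow_mul_wronskian_deriv_div {m : ℕ} {g : Fin (m + 1) → ℝ → ℝ} {x : ℝ}
    (hg : ∀ i, ContDiffAt ℝ m (g i) x) (hg0 : g 0 x ≠ 0) :
    wronskian g x =
      g 0 x ^ (m + 1) * wronskian (fun i : Fin m => deriv fun y => g i.succ y / g 0 y) x := by
  set u : Fin m → ℝ → ℝ := fun i y => g i.succ y / g 0 y
  set v : Fin (m + 1) → ℝ → ℝ := Fin.cons (fun _ => 1) u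
  have hfactor : ∀ i, g i =ᶠ[𝓝 x] fun y => v i y * g 0 y := by
    intro i
    filter_upwards [(hg 0).continuousAt.eventually_ne hg0] with y hy
    cases i using Fin.cases with
    | zero => simp [v]
    | succ i => simp [v, u, div_mul_cancel₀ _ hy]
  have hv : ∀ i, ContDiffAt ℝ (m + 1 - 1 : ℕ) (v i) x := by
    intro i
    cases i using Fin.cases with
    | zero => exact contDiffAt_const
    | succ i =>
      rw [Nat.add_sub_cancel]
      exact (hg i.succ).div (hg 0) hg0
  rw [wronskian_congr hfactor, wronskian_mul_right hv (by simpa using hg 0), wronskian_cons_one,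
    mul_comm]

theorem encard_zeros_const_add_sum_le {s : Set ℝ} (hs : s.OrdConnected) {k : ℕ}
    {h : Fin k → ℝ → ℝ} (hcont : ∀ j, ContinuousOn (h j) s)
    (hdiff : ∀ j, DifferentiableOn ℝ (h j) (interior s)) {c : Fin (k + 1) → ℝ} (hc : c ≠ 0)
    (hderiv : ∀ d : Fin k → ℝ, d ≠ 0 →
      {x ∈ interior s | ∑ j, d j * deriv (h j) x = 0}.encard < k) :
    {x ∈ s | c 0 + ∑ j, c j.succ * h j x = 0}.encard ≤ k := by
  by_cases htail : Fin.tail c = 0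
  · have htail' : ∀ j : Fin k, c j.succ = 0 := fun j => congrFun htail j
    have hc0 : c 0 ≠ 0 := fun h0 => hc (funext fun i => Fin.cases h0 htail' i)
    simp [htail', hc0]
  have hderiv_eq : ∀ x ∈ interior s,
      deriv (fun y => c 0 + ∑ j, c j.succ * h j y) x = ∑ j, c j.succ * deriv (h j) x := by
    intro x hx
    have hdx : ∀ j, DifferentiableAt ℝ (h j) x :=
      fun j => (hdiff j).differentiableAt (isOpen_interior.mem_nhds hx)
    rw [deriv_const_add, deriv_fun_sum fun j _ => (hdx j).const_mul _]
    exact Finset.sum_congr rfl fun j _ => deriv_const_mul _ (hdx j)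
  calc {x ∈ s | c 0 + ∑ j, c j.succ * h j x = 0}.encard
      ≤ {x ∈ interior s | deriv (fun y => c 0 + ∑ j, c j.succ * h j y) x = 0}.encard + 1 :=
        encard_zeros_le_encard_zeros_deriv_add_one hs <| continuousOn_const.add <|
          continuousOn_finsetSum _ fun j _ => continuousOn_const.mul (hcont j)
    _ = {x ∈ interior s | ∑ j, Fin.tail c j * deriv (h j) x = 0}.encard + 1 := by
        congr 2
        ext x
        simp +contextual only [mem_ofPred_eq, and_congr_right_iff]
        exact fun hx => by rw [hderiv_eq x hx]; rfl
    _ ≤ k := Order.add_one_le_of_lt (hderiv _ htail)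

theorem encard_zeros_lt_of_wronskian_pos {s : Set ℝ} (hs : IsOpen s) (hs' : s.OrdConnected)
    {k : ℕ} {g : Fin k → ℝ → ℝ} (hg : ∀ i, ContDiffOn ℝ (k - 1 : ℕ) (g i) s)
    (hW : ∀ x ∈ s, ∀ m (hm : m ≤ k), 0 < wronskian (fun i : Fin m => g (Fin.castLE hm i)) x)
    {c : Fin k → ℝ} (hc : c ≠ 0) :
    {x ∈ s | ∑ j, c j * g j x = 0}.encard < k := by
  induction k with
  | zero => exact absurd (Subsingleton.elim c 0) hc
  | succ k ih =>
    have hg0 : ∀ x ∈ s, 0 < g 0 x := fun x hx => by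
      simpa [wronskian_fin_one] using hW x hx 1 (by omega)
    set u : Fin k → ℝ → ℝ := fun i y => g i.succ y / g 0 y
    have hu : ∀ i, ContDiffOn ℝ k (u i) s := fun i =>
      (hg i.succ).div (hg 0) fun x hx => (hg0 x hx).ne'
    have hWu : ∀ x ∈ s, ∀ m (hm : m ≤ k),
        0 < wronskian (fun i : Fin m => deriv (u (Fin.castLE hm i))) x := by
      intro x hx m hm
      have hWx := hW x hx (m + 1) (by omega)
      rw [wronskian_eq_pow_mul_wronskian_deriv_div
        (fun i => ((hg _).contDiffAt (hs.mem_nhds hx)).of_le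
          (by exact_mod_cast (by omega : m ≤ k)))
        (by simpa using (hg0 x hx).ne')] at hWx
      simp only [Fin.castLE_zero, Fin.castLE_succ] at hWx
      exact pos_of_mul_pos_right hWx (pow_pos (hg0 x hx) _).le
    have hzeros :
        {x ∈ s | ∑ j, c j * g j x = 0} = {x ∈ s | c 0 + ∑ j, c j.succ * u j x = 0} := by
      ext x
      simp +contextual only [mem_ofPred_eq, and_congr_right_iff]
      intro hx
      have hx0 := (hg0 x hx).ne'
      have hfactor : ∑ j, c j * g j x = (c 0 + ∑ j, c j.succ * u j x) * g 0 x := by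
        rw [Fin.sum_univ_succ, add_mul, Finset.sum_mul]
        congr 1
        exact Finset.sum_congr rfl fun j _ => by rw [mul_assoc, div_mul_cancel₀ _ hx0]
      rw [hfactor, mul_eq_zero, or_iff_left hx0]
    rw [hzeros]
    refine (encard_zeros_const_add_sum_le hs' (fun i => (hu i).continuousOn) ?_ hc ?_).trans_lt
      (by exact_mod_cast k.lt_succ_self)
    · rw [hs.interior_eq]
      exact fun i => (hu i).differentiableOn (by simpa using i.pos.ne')
    · intro d hd
      rw [hs.interior_eq]
      refine ih (fun i => (hu i).deriv_of_isOpen hs ?_) hWu hd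
      have := i.pos
      exact_mod_cast (by omega : k - 1 + 1 ≤ k)

theorem iteratedDeriv_pi_apply {ι : Type*} [Fintype ι] {γ : ℝ → ι → ℝ} {m : ℕ} {x : ℝ}
    (hγ : ContDiffAt ℝ m γ x) (i : ι) :
    iteratedDeriv m (fun t => γ t i) x = iteratedDeriv m γ x i := by
  rw [iteratedDeriv_eq_iteratedFDeriv, iteratedDeriv_eq_iteratedFDeriv]
  exact congrArg (· fun _ => 1) ((ContinuousLinearMap.proj i).iteratedFDeriv_comp_left hγ le_rfl)

theorem HasTotallyPositiveTorsion.wronskian_deriv_pos {n : ℕ} {a b : ℝ} {γ : ℝ → Fin n → ℝ}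
    (hγ : HasTotallyPositiveTorsion n a b γ) {x : ℝ} (hx : x ∈ Ioo a b) {m : ℕ} (hm : m ≤ n) :
    0 < wronskian (fun i : Fin m => deriv fun t => γ t (Fin.castLE hm i)) x := by
  rcases Nat.eq_zero_or_pos m with rfl | hm1
  · simp [wronskian]
  convert hγ.2.2 x hx m hm hm1 using 1
  refine congrArg Matrix.det (Matrix.ext fun i j => ?_)
  rw [Matrix.of_apply, Matrix.of_apply, ← iteratedDeriv_succ',
    iteratedDerivWithin_of_isOpen isOpen_Ioo hx, iteratedDeriv_pi_apply]
  exact (hγ.2.1.contDiffAt (isOpen_Ioo.mem_nhds hx)).of_le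
    (by exact_mod_cast (by omega : j + 1 ≤ n))

theorem HasTotallyPositiveTorsion.encard_zeros_le {n : ℕ} {a b : ℝ} {γ : ℝ → Fin n → ℝ}
    (hγ : HasTotallyPositiveTorsion n a b γ) {k : ℕ} (hkn : k ≤ n) {c : Fin (k + 1) → ℝ}
    (hc : c ≠ 0) :
    {t ∈ Icc a b | c 0 + ∑ j : Fin k, c j.succ * γ t (Fin.castLE hkn j) = 0}.encard ≤ k := by
  have hsmooth : ∀ i, ContDiffOn ℝ n (fun t => γ t i) (Ioo a b) := contDiffOn_pi.1 hγ.2.1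
  refine encard_zeros_const_add_sum_le ordConnected_Icc (fun j => continuousOn_pi.1 hγ.1 _)
    (fun j => ?_) hc fun d hd => ?_
  · rw [interior_Icc]
    exact (hsmooth _).differentiableOn (by exact_mod_cast (j.pos.trans_le hkn).ne')
  · rw [interior_Icc]
    refine encard_zeros_lt_of_wronskian_pos isOpen_Ioo ordConnected_Ioo (fun j => ?_)
      (fun x hx m hm => ?_) hd
    · refine (hsmooth _).deriv_of_isOpen isOpen_Ioo ?_
      have := j.pos
      exact_mod_cast (by omega : k - 1 + 1 ≤ n)
    · simpa only [Fin.castLE_castLE] using hγ.wronskian_deriv_pos hx (hm.trans hkn)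

theorem HasTotallyPositiveTorsion.encard_inter_hyperplane_le {n : ℕ} {a b : ℝ}
    {γ : ℝ → Fin n → ℝ} (hγ : HasTotallyPositiveTorsion n a b γ) {c : Fin n → ℝ} (hc : c ≠ 0)
    (c₀ : ℝ) : {t ∈ Icc a b | ∑ j, c j * γ t j = c₀}.encard ≤ n := by
  convert hγ.encard_zeros_le le_rfl (c := Fin.cons (-c₀) c)
    (fun h => hc (funext fun j => by simpa using congrFun h j.succ)) using 3 with t
  simp only [Fin.cons_zero, Fin.cons_succ, Fin.castLE_refl, neg_add_eq_zero, eq_comm (a := c₀)]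

theorem stmt15_general (n : ℕ) (a b : ℝ)
    (γ : ℝ → Fin n → ℝ) (hγ : HasTotallyPositiveTorsion n a b γ) :
    (¬∃ t : Fin (n + 1) → ℝ, Function.Injective t ∧ (∀ i, t i ∈ Set.Icc a b) ∧
        ∃ (c : Fin n → ℝ) (c₀ : ℝ), c ≠ 0 ∧ ∀ i, ∑ j, c j * γ (t i) j = c₀) ∧
    (∀ (k : ℕ), 1 ≤ k → ∀ (hkn : k ≤ n), ∀ c : Fin (k + 1) → ℝ, c ≠ 0 →
        {t ∈ Set.Icc a b |
          c 0 + ∑ j : Fin k, c j.succ * γ t (Fin.castLE hkn j) = 0}.encard ≤ (k : ℕ∞)) := by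
  refine ⟨?_, fun k _ hkn c hc => hγ.encard_zeros_le hkn hc⟩
  rintro ⟨t, ht_inj, ht_mem, c, c₀, hc, hct⟩
  have hsub : range t ⊆ {s ∈ Icc a b | ∑ j, c j * γ s j = c₀} :=
    range_subset_iff.2 fun i => ⟨ht_mem i, hct i⟩
  have hcard := ht_inj.encard_range.trans
    ((encard_le_encard hsub).trans (hγ.encard_inter_hyperplane_le hc c₀))
  rw [ENat.card_eq_coe_fintype_card, Fintype.card_fin] at hcard
  norm_cast at hcard
  omega

theorem stmt15 (n : ℕ) (hn : 1 ≤ n) (a b : ℝ) (hab : a < b)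
    (γ : ℝ → Fin n → ℝ) (hγ : HasTotallyPositiveTorsion n a b γ) :
    (¬∃ t : Fin (n + 1) → ℝ, Function.Injective t ∧ (∀ i, t i ∈ Set.Icc a b) ∧
        ∃ (c : Fin n → ℝ) (c₀ : ℝ), c ≠ 0 ∧ ∀ i, ∑ j, c j * γ (t i) j = c₀) ∧
    (∀ (k : ℕ), 1 ≤ k → ∀ (hkn : k ≤ n), ∀ c : Fin (k + 1) → ℝ, c ≠ 0 →
        {t ∈ Set.Icc a b |
          c 0 + ∑ j : Fin k, c j.succ * γ t (Fin.castLE hkn j) = 0}.encard ≤ (k : ℕ∞)) :=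
  stmt15_general n a b γ hγ

end
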